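/- Let M_2 be the 4-dimensional nilmanifold with a global frame of 1-forms {α, β, γ, η} satisfying dα = dβ = 0, dγ = α ∧ β, dη = α ∧ γ. Then ⟨[β],[β],[α]⟩ = −[β ∧ γ] is a defined, non-vanishing triple Massey product in H^2(M_2)/([β]·H^1 + H^1·[α]); in particular M_2 is not formal. -/
import Mathlib

noncomputable section

/-- Axioms of a graded-commutative differential graded algebra over `ℝ`. -/
structure DGAAxioms {A : Type*} [Ring A] [Algebra ℝ A]
    (𝒜 : ℕ → Submodule ℝ A) (d : A →ₗ[ℝ] A) : Prop where
  one_mem : (1 : A) ∈ 𝒜 0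
  mul_mem : ∀ {i j : ℕ} {a b : A}, a ∈ 𝒜 i → b ∈ 𝒜 j → a * b ∈ 𝒜 (i + j)
  gcomm : ∀ {i j : ℕ} {a b : A}, a ∈ 𝒜 i → b ∈ 𝒜 j →
    a * b = ((-1 : ℝ) ^ (i * j)) • (b * a)
  d_mem : ∀ {i : ℕ} {a : A}, a ∈ 𝒜 i → d a ∈ 𝒜 (i + 1)
  d_d : ∀ a : A, d (d a) = 0
  leibniz : ∀ {i : ℕ} {a : A}, a ∈ 𝒜 i → ∀ b : A,
    d (a * b) = d a * b + ((-1 : ℝ) ^ i) • (a * d b)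

/-- Formality data: a DGA morphism to a graded algebra with zero differential
inducing an isomorphism on cohomology. -/
structure FormalityWitness {A : Type*} [Ring A] [Algebra ℝ A]
    (𝒜 : ℕ → Submodule ℝ A) (d : A →ₗ[ℝ] A) where
  B : Type
  [ringB : Ring B]
  [algB : Algebra ℝ B]
  ℬ : ℕ → Submodule ℝ B
  hB : DGAAxioms ℬ (0 : B →ₗ[ℝ] B)
  ψ : A →ₐ[ℝ] B
  grade : ∀ {i : ℕ} {a : A}, a ∈ 𝒜 i → ψ a ∈ ℬ i
  chain : ∀ a : A, ψ (d a) = 0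
  injOnCoh : ∀ (i : ℕ) (a : A), a ∈ 𝒜 i → d a = 0 → ψ a = 0 →
    ∃ x ∈ 𝒜 (i - 1), d x = a
  surjOnCoh : ∀ (i : ℕ), ∀ b ∈ ℬ i, ∃ a ∈ 𝒜 i, d a = 0 ∧ ψ a = b

/-- The Chevalley–Eilenberg algebra `⋀(α, β, γ, η)` of the `4`-dimensional
nilmanifold `M₂` (all generators of degree one): the exterior algebra on a
`4`-dimensional vector space. -/
abbrev M2Alg := ExteriorAlgebra ℝ (Fin 4 → ℝ)

/-- The word-length grading of `⋀(α, β, γ, η)`. -/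
def M2Grading (i : ℕ) : Submodule ℝ M2Alg :=
  LinearMap.range (ExteriorAlgebra.ι ℝ (M := Fin 4 → ℝ)) ^ i

def genAlpha : M2Alg := ExteriorAlgebra.ι ℝ (Pi.single 0 1)
def genBeta : M2Alg := ExteriorAlgebra.ι ℝ (Pi.single 1 1)
def genGamma : M2Alg := ExteriorAlgebra.ι ℝ (Pi.single 2 1)
def genEta : M2Alg := ExteriorAlgebra.ι ℝ (Pi.single 3 1)

open ExteriorAlgebra

/-- The degree-2 "coefficient of `eₐ ∧ e_b`" functional on the exterior algebra,
as an alternating map. -/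
def coefAM (a b : Fin 4) : (Fin 4 → ℝ) [⋀^Fin 2]→ₗ[ℝ] ℝ :=
  (Matrix.detRowAlternating (n := Fin 2) (R := ℝ)).compLinearMap (LinearMap.funLeft ℝ ℝ ![a, b])

def coefFam (a b : Fin 4) : ∀ i : ℕ, (Fin 4 → ℝ) [⋀^Fin i]→ₗ[ℝ] ℝ
  | 2 => coefAM a b
  | _ => 0

/-- The degree-2 coefficient functional on the exterior algebra. -/
def coefL (a b : Fin 4) : M2Alg →ₗ[ℝ] ℝ :=
  ExteriorAlgebra.liftAlternating (coefFam a b)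

lemma coefL_ι_mul_ι (a b : Fin 4) (v w : Fin 4 → ℝ) :
    coefL a b (ι ℝ v * ι ℝ w) = v a * w b - v b * w a := by
  rw [coefL, liftAlternating_ι_mul, liftAlternating_ι]
  show Matrix.det (Matrix.of fun i j => (Matrix.vecCons v ![w] i) (![a, b] j)) = _
  rw [Matrix.det_fin_two]
  simp

lemma iota_mem_one (v : Fin 4 → ℝ) : ι ℝ v ∈ M2Grading 1 := by
  rw [M2Grading, pow_one]
  exact ⟨v, rfl⟩

lemma mem_one_iff {x : M2Alg} (hx : x ∈ M2Grading 1) : ∃ v : Fin 4 → ℝ, ι ℝ v = x := by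
  rw [M2Grading, pow_one] at hx
  exact hx

lemma iota_decomp (v : Fin 4 → ℝ) :
    ι ℝ v = v 0 • genAlpha + v 1 • genBeta + v 2 • genGamma + v 3 • genEta := by
  rw [genAlpha, genBeta, genGamma, genEta, ← map_smul, ← map_smul, ← map_smul, ← map_smul,
    ← map_add, ← map_add, ← map_add]
  congr 1
  funext j
  fin_cases j <;> simp [Pi.single_apply]

set_option maxHeartbeats 1000000

/-- Let `M₂` be the `4`-dimensional nilmanifold with global frame of `1`-forms
`{α, β, γ, η}` satisfying `dα = dβ = 0`, `dγ = α ∧ β`, `dη = α ∧ γ`; its de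
Rham cohomology is computed by the displayed Chevalley–Eilenberg DGA (Nomizu).
Then `⟨[β],[β],[α]⟩` is a defined triple Massey product: `β·β = 0`,
`β·α = d(−γ)`, and with the choices `ξ₁₂ = 0`, `ξ₂₃ = −γ` its representative
`β·ξ₂₃ + (−1)^{1+1} ξ₁₂·α` equals `−β∧γ`, so `⟨[β],[β],[α]⟩ = −[β ∧ γ]`; this
Massey product does not vanish in `H²/( [β]·H¹ + H¹·[α])`, and in particular
`M₂` is not formal. -/
theorem M2_massey_nonvanishing_and_nonformal
    (d : M2Alg →ₗ[ℝ] M2Alg) (hDGA : DGAAxioms M2Grading d)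
    (hdα : d genAlpha = 0) (hdβ : d genBeta = 0)
    (hdγ : d genGamma = genAlpha * genBeta)
    (hdη : d genEta = genAlpha * genGamma) :
    genBeta * genBeta = 0 ∧
    d (-genGamma) = genBeta * genAlpha ∧
    genBeta * (-genGamma) + ((-1 : ℝ) ^ (1 + 1)) • ((0 : M2Alg) * genAlpha) =
      -(genBeta * genGamma) ∧
    (∀ ξ₁₂ ∈ M2Grading 1, d ξ₁₂ = genBeta * genBeta →
      ∀ ξ₂₃ ∈ M2Grading 1, d ξ₂₃ = genBeta * genAlpha →
      ¬ (∃ x ∈ M2Grading 1, d x = 0 ∧ ∃ y ∈ M2Grading 1, d y = 0 ∧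
          ∃ η ∈ M2Grading 1,
            genBeta * ξ₂₃ + ((-1 : ℝ) ^ (1 + 1)) • (ξ₁₂ * genAlpha) =
              genBeta * x + y * genAlpha + d η)) ∧
    ¬ Nonempty (FormalityWitness M2Grading d) := by
  -- basic multiplicative identities
  have hββ : genBeta * genBeta = 0 := ExteriorAlgebra.ι_sq_zero _
  have hβα : genBeta * genAlpha = -(genAlpha * genBeta) := by
    rw [genAlpha, genBeta]
    exact eq_neg_of_add_eq_zero_left (ExteriorAlgebra.ι_add_mul_swap _ _)
  have hdγ' : d (-genGamma) = genBeta * genAlpha := by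
    rw [map_neg, hdγ, hβα]
  have hrep : genBeta * (-genGamma) + ((-1 : ℝ) ^ (1 + 1)) • ((0 : M2Alg) * genAlpha) =
      -(genBeta * genGamma) := by
    rw [mul_neg, zero_mul, smul_zero, add_zero]
  -- the differential on a general degree-one element
  have hdι : ∀ v : Fin 4 → ℝ,
      d (ι ℝ v) = v 2 • (genAlpha * genBeta) + v 3 • (genAlpha * genGamma) := by
    intro v
    rw [iota_decomp, map_add, map_add, map_add, map_smul, map_smul, map_smul, map_smul,
      hdα, hdβ, hdγ, hdη]
    rw [smul_zero, smul_zero, zero_add, zero_add]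
  -- coefficient computations
  have c01 : ∀ v : Fin 4 → ℝ, coefL 0 1 (d (ι ℝ v)) = v 2 := by
    intro v
    rw [hdι, map_add, map_smul, map_smul, genAlpha, genBeta, genGamma,
      coefL_ι_mul_ι, coefL_ι_mul_ι]
    simp [Pi.single_apply]
  have c12d : ∀ v : Fin 4 → ℝ, coefL 1 2 (d (ι ℝ v)) = 0 := by
    intro v
    rw [hdι, map_add, map_smul, map_smul, genAlpha, genBeta, genGamma,
      coefL_ι_mul_ι, coefL_ι_mul_ι]
    simp [Pi.single_apply]
  have c12βv : ∀ v : Fin 4 → ℝ, coefL 1 2 (genBeta * ι ℝ v) = v 2 := by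
    intro v
    rw [genBeta, coefL_ι_mul_ι]
    simp [Pi.single_apply]
  have c12vα : ∀ v : Fin 4 → ℝ, coefL 1 2 (ι ℝ v * genAlpha) = 0 := by
    intro v
    rw [genAlpha, coefL_ι_mul_ι]
    simp [Pi.single_apply]
  -- the key non-vanishing statement
  have key : ∀ ξ₁₂ ∈ M2Grading 1, d ξ₁₂ = genBeta * genBeta →
      ∀ ξ₂₃ ∈ M2Grading 1, d ξ₂₃ = genBeta * genAlpha →
      ¬ (∃ x ∈ M2Grading 1, d x = 0 ∧ ∃ y ∈ M2Grading 1, d y = 0 ∧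
          ∃ η ∈ M2Grading 1,
            genBeta * ξ₂₃ + ((-1 : ℝ) ^ (1 + 1)) • (ξ₁₂ * genAlpha) =
              genBeta * x + y * genAlpha + d η) := by
    intro ξ₁₂ h12m _ ξ₂₃ h23m h23d
    obtain ⟨u, rfl⟩ := mem_one_iff h12m
    obtain ⟨v, rfl⟩ := mem_one_iff h23m
    rintro ⟨x, hxm, hxd, y, hym, _, η, hηm, heq⟩
    obtain ⟨p, rfl⟩ := mem_one_iff hxm
    obtain ⟨q, rfl⟩ := mem_one_iff hym
    obtain ⟨r, rfl⟩ := mem_one_iff hηm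
    -- coefficient of α∧β in dξ₂₃ = βα gives v 2 = -1
    have hv2 : v 2 = -1 := by
      have h := congrArg (coefL 0 1) h23d
      rw [c01, hβα, map_neg, genAlpha, genBeta, coefL_ι_mul_ι] at h
      simpa [Pi.single_apply] using h
    -- x closed gives p 2 = 0
    have hp2 : p 2 = 0 := by
      have h := congrArg (coefL 0 1) hxd
      rw [c01] at h
      simpa using h
    -- apply the β∧γ-coefficient functional to the equation
    have h := congrArg (coefL 1 2) heq
    rw [map_add, map_add, map_add, map_smul, c12βv, c12vα, c12βv, c12vα, c12d] at h
    rw [hv2, hp2] at h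
    norm_num at h
  refine ⟨hββ, hdγ', hrep, key, ?_⟩
  -- non-formality
  rintro ⟨W⟩
  letI := W.ringB
  letI := W.algB
  have hα1 : genAlpha ∈ M2Grading 1 := iota_mem_one _
  have hβ1 : genBeta ∈ M2Grading 1 := iota_mem_one _
  have hγ1 : genGamma ∈ M2Grading 1 := iota_mem_one _
  have hmγ1 : -genGamma ∈ M2Grading 1 := neg_mem hγ1
  obtain ⟨x, hx1, hxd, hxψ⟩ := W.surjOnCoh 1 (W.ψ (-genGamma)) (W.grade hmγ1)
  set a : M2Alg := -(genBeta * genGamma) - genBeta * x with ha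
  have hβab : genBeta * (genAlpha * genBeta) = 0 := by
    rw [← mul_assoc, hβα, neg_mul, mul_assoc, hββ, mul_zero, neg_zero]
  have hdβγ : d (genBeta * genGamma) = 0 := by
    rw [hDGA.leibniz hβ1, hdβ, hdγ, zero_mul, zero_add, hβab, smul_zero]
  have ha_mem : a ∈ M2Grading 2 := by
    refine sub_mem (neg_mem ?_) ?_
    · exact hDGA.mul_mem hβ1 hγ1
    · exact hDGA.mul_mem hβ1 hx1
  have ha_closed : d a = 0 := by
    rw [ha, map_sub, map_neg, hdβγ, hDGA.leibniz hβ1, hdβ, hxd, zero_mul, mul_zero,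
      smul_zero, zero_add, neg_zero, sub_zero]
  have ha_ψ : W.ψ a = 0 := by
    rw [ha, map_sub, map_neg, map_mul, map_mul, hxψ, map_neg, mul_neg, sub_neg_eq_add,
      neg_add_cancel]
  obtain ⟨η, hη1, hηd⟩ := W.injOnCoh 2 a ha_mem ha_closed ha_ψ
  refine key 0 (zero_mem _) (by rw [map_zero, hββ]) (-genGamma) hmγ1 hdγ'
    ⟨x, hx1, hxd, 0, zero_mem _, map_zero _, η, hη1, ?_⟩
  rw [hηd, hrep, ha, zero_mul, add_zero]
  abel
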